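/- arXiv:0801.4217 — 2 statements merged into one kernel-verified Lean document; each statement's English description precedes it below -/
import Mathlib

section
/- Let V be a module over a Lie algebra G = Vir ⊕ (Vir⊗t) (the truncated Virasoro algebra Vir⊗ℂ[t]/⟨t²⟩), with d'_j denoting d_j⊗t. If for some a ∈ ℂ and n ∈ ℕ one has (d'_0 − a)^n·V = 0, then for every j ≠ 0 and every 0 ≤ r ≤ n, (d'_j)^r·(d'_0 − a)^{n−r}·V = 0. -/
/-!
Set `X = d'₀ - a`, `Y = d'ⱼ` and `D = dⱼ`. Then `D` commutes with `Y`, `Y` commutes with `X`,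
and `[D, X] = -j Y`, so `[D, X^(m+1)] = -(m+1) j Y X^m`. Hence if `Y^r X^(m+1) = 0`, commuting
`D` past it gives `Y^(r+1) X^m = 0`; induction on `r` starting from `X^n = 0` gives the claim.
-/

theorem mul_pow_succ_sub_pow_succ_mul {R : Type*} [Ring R] {D x y : R}
    (hDx : D * x - x * D = y) (hyx : Commute y x) (m : ℕ) :
    D * x ^ (m + 1) - x ^ (m + 1) * D = (m + 1) • (y * x ^ m) := by
  induction m with
  | zero => simpa using hDx
  | succ m ih =>
    have hD : D * x = y + x * D := sub_eq_iff_eq_add.mp hDx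
    have hDpow : D * x ^ (m + 1) = x ^ (m + 1) * D + (m + 1) • (y * x ^ m) :=
      sub_eq_iff_eq_add'.mp ih
    have hyxpow : y * x ^ (m + 1) = x * (y * x ^ m) := by
      rw [pow_succ', ← mul_assoc, hyx.eq, mul_assoc]
    rw [pow_succ' x (m + 1), ← mul_assoc, hD, add_mul, mul_assoc, hDpow, mul_add, ← mul_assoc,
      ← pow_succ', mul_smul_comm, ← hyxpow, succ_nsmul (y * x ^ (m + 1)) (m + 1)]
    abel

section Propagation

variable {K R : Type*} [Field K] [CharZero K] [Ring R] [Algebra K R]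
  {D x y : R} {c : K}

theorem pow_succ_mul_pow_eq_zero_of_commutator (hc : c ≠ 0) (hDx : D * x - x * D = c • y)
    (hDy : Commute D y) (hyx : Commute y x) {r m : ℕ} (h : y ^ r * x ^ (m + 1) = 0) :
    y ^ (r + 1) * x ^ m = 0 := by
  have hcommutator : y ^ r * (D * x ^ (m + 1) - x ^ (m + 1) * D) = 0 := by
    rw [mul_sub, ← mul_assoc, ← (hDy.pow_right r).eq, mul_assoc, ← mul_assoc (y ^ r), h, mul_zero,
      zero_mul, sub_zero]
  rw [mul_pow_succ_sub_pow_succ_mul hDx (hyx.smul_left c) m, ← Nat.cast_smul_eq_nsmul K,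
    smul_mul_assoc, mul_smul_comm, mul_smul_comm, ← mul_assoc, ← pow_succ, smul_smul] at hcommutator
  refine (smul_eq_zero.mp hcommutator).resolve_left (mul_ne_zero ?_ hc)
  exact_mod_cast m.succ_ne_zero

theorem pow_mul_pow_sub_eq_zero_of_commutator (hc : c ≠ 0) (hDx : D * x - x * D = c • y)
    (hDy : Commute D y) (hyx : Commute y x) {n : ℕ} (hx : x ^ n = 0) :
    ∀ r ≤ n, y ^ r * x ^ (n - r) = 0
  | 0, _ => by simpa using hx
  | r + 1, hr => by
    have h := pow_mul_pow_sub_eq_zero_of_commutator hc hDx hDy hyx hx r (by omega)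
    rw [show n - r = n - (r + 1) + 1 by omega] at h
    exact pow_succ_mul_pow_eq_zero_of_commutator hc hDx hDy hyx h

end Propagation

theorem truncated_virasoro_nilpotency_propagation_general
    (V : Type*) [AddCommGroup V] [Module ℂ V]
    (d d' : ℤ → Module.End ℂ V) (c' : Module.End ℂ V) (a : ℂ) (n : ℕ)
    (hdd' : ∀ i j : ℤ, d i * d' j - d' j * d i
      = (((j : ℂ) - (i : ℂ))) • d' (i + j)
        + (if i + j = 0 then (((i : ℂ) ^ 3 - (i : ℂ)) / 12) else 0) • c')
    (hd'd' : ∀ i j : ℤ, d' i * d' j = d' j * d' i)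
    (h : (d' 0 - a • (1 : Module.End ℂ V)) ^ n = 0) :
    ∀ j : ℤ, j ≠ 0 → ∀ r : ℕ, r ≤ n →
      (d' j) ^ r * (d' 0 - a • (1 : Module.End ℂ V)) ^ (n - r) = 0 := by
  intro j hj
  have hDY : Commute (d j) (d' j) := by
    simpa [Commute, SemiconjBy, sub_eq_zero, show j + j ≠ 0 by omega] using hdd' j j
  have hDX : d j * (d' 0 - a • 1) - (d' 0 - a • 1) * d j = (-(j : ℂ)) • d' j := by
    simpa [mul_sub, sub_mul, hj] using hdd' j 0
  have hYX : Commute (d' j) (d' 0 - a • 1) :=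
    Commute.sub_right (hd'd' j 0) ((Commute.one_right _).smul_right a)
  exact pow_mul_pow_sub_eq_zero_of_commutator (neg_ne_zero.mpr (Int.cast_ne_zero.mpr hj))
    hDX hDY hYX h

/-- Let `V` be a module over the truncated Virasoro algebra
`G = Vir ⊕ (Vir⊗t) = Vir ⊗ ℂ[t]/⟨t²⟩`, given by operators `d i` (for `d_i⊗1`),
`d' i` (for `d_i⊗t`) and a central `c'` (for `c⊗t`), satisfying
`[d_i, d'_j] = (j−i)d'_{i+j} + δ_{i+j,0}((i³−i)/12)c'`, with the `d'_i` commuting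
among themselves and `c'` commuting with everything.
If `(d'_0 − a)^n` annihilates `V` for some `a ∈ ℂ` and `n ∈ ℕ`, then for every
`j ≠ 0` and every `r ≤ n` we have `(d'_j)^r (d'_0 − a)^{n−r} V = 0`. -/
theorem truncated_virasoro_nilpotency_propagation
    (V : Type*) [AddCommGroup V] [Module ℂ V]
    (d d' : ℤ → Module.End ℂ V) (c' : Module.End ℂ V) (a : ℂ) (n : ℕ)
    (hdd' : ∀ i j : ℤ, d i * d' j - d' j * d i
      = (((j : ℂ) - (i : ℂ))) • d' (i + j)
        + (if i + j = 0 then (((i : ℂ) ^ 3 - (i : ℂ)) / 12) else 0) • c')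
    (hd'd' : ∀ i j : ℤ, d' i * d' j = d' j * d' i)
    (hc'd' : ∀ i : ℤ, d' i * c' = c' * d' i)
    (hc'd : ∀ i : ℤ, d i * c' = c' * d i)
    (h : (d' 0 - a • (1 : Module.End ℂ V)) ^ n = 0) :
    ∀ j : ℤ, j ≠ 0 → ∀ r : ℕ, r ≤ n →
      (d' j) ^ r * (d' 0 - a • (1 : Module.End ℂ V)) ^ (n - r) = 0 :=
  truncated_virasoro_nilpotency_propagation_general V d d' c' a n hdd' hd'd' h
end

section
/- For the linear functional φ on the Cartan part of the loop-Virasoro algebra defined by φ(d_0⊗t^k) = (−1)^k·k and φ(c⊗t^k) = 0 for all k ∈ ℤ, the polynomial P(t) = (t+1)² satisfies φ(d_0⊗t^k·P(t)) = 0 and φ(c⊗t^k·P(t)) = 0 for all k ∈ ℤ, but no polynomial of degree 1 with nonzero constant term, i.e., no P(t) = t − a with a ≠ 0, satisfies φ(d_0⊗t^k(t−a)) = 0 for all k. -/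
namespace GeneralizedEvaluationExample

open LaurentPolynomial

/-- The linear functional `φ` on the Cartan part, on the `d_0⊗t^k` components:
`φ(d_0⊗t^k) = (−1)^k·k`, extended linearly to `φ(d_0⊗Q) = Σ q_n·(−1)^n·n`. -/
noncomputable def phiD (Q : LaurentPolynomial ℂ) : ℂ :=
  Finsupp.sum Q.coeff fun n c => c * ((-1 : ℂ) ^ n * (n : ℂ))

/-- The functional `φ` on the `c⊗t^k` components: `φ(c⊗t^k) = 0`, extended linearly. -/
noncomputable def phiC (Q : LaurentPolynomial ℂ) : ℂ :=
  Finsupp.sum Q.coeff fun _ _ => (0 : ℂ)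

theorem phiC_eq_zero (Q : LaurentPolynomial ℂ) : phiC Q = 0 :=
  Finset.sum_const_zero

theorem phiD_add (p q : LaurentPolynomial ℂ) : phiD (p + q) = phiD p + phiD q := by
  unfold phiD
  rw [AddMonoidAlgebra.coeff_add]
  exact Finsupp.sum_add_index' (fun _ => zero_mul _) (fun _ a b => add_mul a b _)

theorem phiD_C_mul_T (c : ℂ) (n : ℤ) : phiD (C c * T n) = c * ((-1) ^ n * n) := by
  unfold phiD
  rw [← single_eq_C_mul_T, AddMonoidAlgebra.coeff_single]
  exact Finsupp.sum_single_index (zero_mul _)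

theorem phiD_T (n : ℤ) : phiD (T n) = (-1) ^ n * n := by
  simpa using phiD_C_mul_T 1 n

theorem T_mul_T_add_one_sq (k : ℤ) :
    (T k : LaurentPolynomial ℂ) * (T 1 + 1) ^ 2 = T (k + 2) + C 2 * T (k + 1) + T k := by
  rw [show k + 2 = k + 1 + 1 by ring]
  simp only [T_add, map_ofNat]
  ring

theorem T_mul_T_sub_C (k : ℤ) (a : ℂ) :
    (T k : LaurentPolynomial ℂ) * (T 1 - C a) = T (k + 1) + C (-a) * T k := by
  simp only [T_add, map_neg]
  ring

/-- `(−1)^{k+2}(k+2) + 2(−1)^{k+1}(k+1) + (−1)^k k = (−1)^k ((k+2) − 2(k+1) + k) = 0`. -/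
theorem phiD_T_mul_T_add_one_sq (k : ℤ) : phiD (T k * (T 1 + 1) ^ 2) = 0 := by
  rw [T_mul_T_add_one_sq, phiD_add, phiD_add, phiD_T, phiD_C_mul_T, phiD_T,
    zpow_add₀ (neg_ne_zero.2 one_ne_zero), zpow_add₀ (neg_ne_zero.2 one_ne_zero)]
  push_cast
  ring

theorem phiD_T_mul_T_sub_C (k : ℤ) (a : ℂ) :
    phiD (T k * (T 1 - C a)) = (-1) ^ (k + 1) * (k + 1) - a * ((-1) ^ k * k) := by
  rw [T_mul_T_sub_C, phiD_add, phiD_T, phiD_C_mul_T]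
  push_cast
  ring

/-- For `φ(d_0⊗t^k) = (−1)^k·k` and `φ(c⊗t^k) = 0`, the polynomial `P(t) = (t+1)²`
satisfies `φ(d_0⊗t^k·P(t)) = 0` and `φ(c⊗t^k·P(t)) = 0` for all `k ∈ ℤ`, but no
degree-one polynomial `t − a` with nonzero constant term (`a ≠ 0`) satisfies
`φ(d_0⊗t^k(t−a)) = 0` for all `k`. -/
theorem generalized_evaluation_example :
    (∀ k : ℤ, phiD (T k * ((T 1 : LaurentPolynomial ℂ) + 1) ^ 2) = 0) ∧
    (∀ k : ℤ, phiC (T k * ((T 1 : LaurentPolynomial ℂ) + 1) ^ 2) = 0) ∧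
    (∀ a : ℂ, a ≠ 0 →
      ¬ (∀ k : ℤ, phiD (T k * ((T 1 : LaurentPolynomial ℂ) - C a)) = 0)) := by
  refine ⟨phiD_T_mul_T_add_one_sq, fun k => phiC_eq_zero _, fun a _ h => ?_⟩
  have h0 := h 0
  rw [phiD_T_mul_T_sub_C] at h0
  norm_num at h0

end GeneralizedEvaluationExample
end
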